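/- arXiv:2101.01799 — 7 statements merged into one kernel-verified Lean document; each statement's English description precedes it below -/
import Mathlib

section
/- Let f: ℝ^m → ℝ be μ-strongly convex and differentiable, let g: ℝ^p → ℝ be convex, let G ∈ ℝ^{p×m}, K ∈ ℝ^{r×p}, h ∈ ℝ^p, e ∈ ℝ^r, ν > 0. Define L(u,λ) = f(u) + g(Gu + h) + λᵀ(K(Gu+h) - e) and L_ν(u,λ) = L(u,λ) - (ν/2)‖λ‖². If (u*, λ*) is a saddle point of L over ℝ^m × ℝ^r_{≥0} and (u*_ν, λ*_ν) is a saddle point of L_ν over ℝ^m × ℝ^r_{≥0}, then μ‖u*_ν - u*‖² + (ν/2)‖λ*_ν‖² ≤ (ν/2)‖λ*‖². In particular ‖u*_ν - u*‖ ≤ √(ν/(2μ))·‖λ*‖. -/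
open Matrix

lemma dot_self_nonneg {n : ℕ} (w : Fin n → ℝ) : 0 ≤ w ⬝ᵥ w :=
  Finset.sum_nonneg fun i _ => mul_self_nonneg (w i)

/-- Growth of a strongly convex + convex sum at its minimizer. -/
lemma key_growth {m : ℕ} (f : (Fin m → ℝ) → ℝ) (gf : (Fin m → ℝ) → (Fin m → ℝ))
    (μ : ℝ) (hμ : 0 < μ)
    (hsc : ∀ u v, f v ≥ f u + gf u ⬝ᵥ (v - u) + μ / 2 * ((v - u) ⬝ᵥ (v - u)))
    (ψ : (Fin m → ℝ) → ℝ)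
    (hψ : ∀ (a b : Fin m → ℝ) (t : ℝ), 0 < t → t < 1 →
      ψ ((1-t) • a + t • b) ≤ (1-t) * ψ a + t * ψ b)
    (x : Fin m → ℝ) (hmin : ∀ z, f x + ψ x ≤ f z + ψ z) (y : Fin m → ℝ) :
    f x + ψ x + μ/2 * ((y - x) ⬝ᵥ (y - x)) ≤ f y + ψ y := by
  set D := (y - x) ⬝ᵥ (y - x) with hDdef
  have hD : 0 ≤ D := dot_self_nonneg _
  clear_value D
  have step : ∀ t : ℝ, 0 < t → t < 1 →
      μ/2 * (1-t) * D ≤ (f y + ψ y) - (f x + ψ x) := by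
    intro t ht ht1
    set z := (1-t) • x + t • y with hz
    have hxz : x - z = (-t) • (y - x) := by rw [hz]; module
    have hyz : y - z = (1-t) • (y - x) := by rw [hz]; module
    set A := gf z ⬝ᵥ (y - x) with hA
    have e1 : gf z ⬝ᵥ (x - z) = (-t) * A := by
      rw [hxz, dotProduct_smul, smul_eq_mul]
    have e2 : (x - z) ⬝ᵥ (x - z) = t^2 * D := by
      rw [hxz, smul_dotProduct, dotProduct_smul, smul_eq_mul, smul_eq_mul, hDdef]; ring
    have e3 : gf z ⬝ᵥ (y - z) = (1-t) * A := by
      rw [hyz, dotProduct_smul, smul_eq_mul]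
    have e4 : (y - z) ⬝ᵥ (y - z) = (1-t)^2 * D := by
      rw [hyz, smul_dotProduct, dotProduct_smul, smul_eq_mul, smul_eq_mul, hDdef]; ring
    have h1 := hsc z x
    have h2 := hsc z y
    rw [e1, e2] at h1
    rw [e3, e4] at h2
    have c1 : (1-t) * (f z + (-t) * A + μ/2 * (t^2 * D)) ≤ (1-t) * f x :=
      mul_le_mul_of_nonneg_left h1 (by linarith)
    have c2 : t * (f z + (1-t) * A + μ/2 * ((1-t)^2 * D)) ≤ t * f y :=
      mul_le_mul_of_nonneg_left h2 (by linarith)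
    have h5 := hψ x y t ht ht1
    have h6 := hmin z
    have key2 : t * (μ/2 * (1-t) * D) ≤ t * ((f y + ψ y) - (f x + ψ x)) := by
      nlinarith [c1, c2, h5, h6]
    exact le_of_mul_le_mul_left key2 ht
  by_contra hcon
  push_neg at hcon
  set ε := f x + ψ x + μ/2 * D - (f y + ψ y) with hε
  clear_value ε
  have hεpos : 0 < ε := by simp only [hε]; linarith
  have hy := hmin y
  have hDpos : 0 < D := by nlinarith
  set t : ℝ := min (1/2) (ε / (μ * D)) with htdef
  have ht : 0 < t := lt_min (by norm_num) (div_pos hεpos (mul_pos hμ hDpos))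
  have ht1 : t < 1 := lt_of_le_of_lt (min_le_left _ _) (by norm_num)
  have htle : t ≤ ε / (μ * D) := min_le_right _ _
  clear_value t
  have hst := step t ht ht1
  have : μ/2 * t * D ≤ ε/2 := by
    have : t * (μ * D) ≤ ε := by
      rw [← div_mul_cancel₀ ε (show (μ*D) ≠ 0 by positivity)]
      exact mul_le_mul_of_nonneg_right htle (by positivity)
    nlinarith
  nlinarith [hst]

/-- Convexity of `u ↦ g (G u + h) + l ⬝ (K (G u + h) - e)`. -/
lemma psi_convex {m p r : ℕ} (g : (Fin p → ℝ) → ℝ) (hg : ConvexOn ℝ Set.univ g)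
    (G : Matrix (Fin p) (Fin m) ℝ) (K : Matrix (Fin r) (Fin p) ℝ)
    (h : Fin p → ℝ) (e : Fin r → ℝ) (l : Fin r → ℝ)
    (a b : Fin m → ℝ) (t : ℝ) (ht : 0 < t) (ht1 : t < 1) :
    g (G *ᵥ ((1-t) • a + t • b) + h) +
      l ⬝ᵥ (K *ᵥ (G *ᵥ ((1-t) • a + t • b) + h) - e) ≤
    (1-t) * (g (G *ᵥ a + h) + l ⬝ᵥ (K *ᵥ (G *ᵥ a + h) - e)) +
      t * (g (G *ᵥ b + h) + l ⬝ᵥ (K *ᵥ (G *ᵥ b + h) - e)) := by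
  have haff : G *ᵥ ((1-t) • a + t • b) + h = (1-t) • (G *ᵥ a + h) + t • (G *ᵥ b + h) := by
    rw [Matrix.mulVec_add, Matrix.mulVec_smul, Matrix.mulVec_smul]; module
  rw [haff]
  have hgpart : g ((1-t) • (G *ᵥ a + h) + t • (G *ᵥ b + h)) ≤
      (1-t) * g (G *ᵥ a + h) + t * g (G *ᵥ b + h) := by
    have := hg.2 (Set.mem_univ (G *ᵥ a + h)) (Set.mem_univ (G *ᵥ b + h))
      (by linarith : (0:ℝ) ≤ 1 - t) (le_of_lt ht) (by ring)
    simpa [smul_eq_mul] using this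
  have hlin : K *ᵥ ((1-t) • (G *ᵥ a + h) + t • (G *ᵥ b + h)) - e =
      (1-t) • (K *ᵥ (G *ᵥ a + h) - e) + t • (K *ᵥ (G *ᵥ b + h) - e) := by
    rw [Matrix.mulVec_add, Matrix.mulVec_smul, Matrix.mulVec_smul]; module
  have hlin2 : l ⬝ᵥ (K *ᵥ ((1-t) • (G *ᵥ a + h) + t • (G *ᵥ b + h)) - e) =
      (1-t) * (l ⬝ᵥ (K *ᵥ (G *ᵥ a + h) - e)) + t * (l ⬝ᵥ (K *ᵥ (G *ᵥ b + h) - e)) := by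
    rw [hlin, dotProduct_add, dotProduct_smul, dotProduct_smul, smul_eq_mul, smul_eq_mul]
  rw [hlin2]
  linarith

/-- Regularization-error bound for saddle points of the Lagrangian
`L(u,λ) = f(u) + g(Gu+h) + λᵀ(K(Gu+h) - e)` and its regularization
`L_ν(u,λ) = L(u,λ) - (ν/2)‖λ‖²` over `ℝ^m × ℝ^r_{≥0}`:
`μ‖u*_ν - u*‖² + (ν/2)‖λ*_ν‖² ≤ (ν/2)‖λ*‖²` and
`‖u*_ν - u*‖ ≤ √(ν/(2μ))‖λ*‖`. -/
theorem stmt_2 {m p r : ℕ}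
    (f : (Fin m → ℝ) → ℝ) (gf : (Fin m → ℝ) → (Fin m → ℝ))
    (g : (Fin p → ℝ) → ℝ)
    (G : Matrix (Fin p) (Fin m) ℝ) (K : Matrix (Fin r) (Fin p) ℝ)
    (h : Fin p → ℝ) (e : Fin r → ℝ) (μ ν : ℝ) (hμ : 0 < μ) (hν : 0 < ν)
    -- f is μ-strongly convex with gradient gf
    (hsc : ∀ u v, f v ≥ f u + gf u ⬝ᵥ (v - u) + μ / 2 * ((v - u) ⬝ᵥ (v - u)))
    -- g is convex
    (hg : ConvexOn ℝ Set.univ g)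
    (L : (Fin m → ℝ) → (Fin r → ℝ) → ℝ)
    (hL : ∀ u l, L u l = f u + g (G *ᵥ u + h) + l ⬝ᵥ (K *ᵥ (G *ᵥ u + h) - e))
    (Lν : (Fin m → ℝ) → (Fin r → ℝ) → ℝ)
    (hLν : ∀ u l, Lν u l = L u l - ν / 2 * (l ⬝ᵥ l))
    (us : Fin m → ℝ) (ls : Fin r → ℝ) (hls : ∀ i, 0 ≤ ls i)
    (hsaddle : ∀ (u : Fin m → ℝ) (l : Fin r → ℝ), (∀ i, 0 ≤ l i) →
      L us l ≤ L us ls ∧ L us ls ≤ L u ls)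
    (uν : Fin m → ℝ) (lν : Fin r → ℝ) (hlν : ∀ i, 0 ≤ lν i)
    (hsaddleν : ∀ (u : Fin m → ℝ) (l : Fin r → ℝ), (∀ i, 0 ≤ l i) →
      Lν uν l ≤ Lν uν lν ∧ Lν uν lν ≤ Lν u lν) :
    μ * ((uν - us) ⬝ᵥ (uν - us)) + ν / 2 * (lν ⬝ᵥ lν) ≤ ν / 2 * (ls ⬝ᵥ ls) ∧
    Real.sqrt ((uν - us) ⬝ᵥ (uν - us)) ≤
      Real.sqrt (ν / (2 * μ)) * Real.sqrt (ls ⬝ᵥ ls) := by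
  set D := (uν - us) ⬝ᵥ (uν - us) with hDdef
  have hD : 0 ≤ D := dot_self_nonneg _
  clear_value D
  -- ψ for a fixed multiplier l
  set ψs : (Fin m → ℝ) → ℝ :=
    fun u => g (G *ᵥ u + h) + ls ⬝ᵥ (K *ᵥ (G *ᵥ u + h) - e) with hψs
  clear_value ψs
  set ψν : (Fin m → ℝ) → ℝ :=
    fun u => g (G *ᵥ u + h) + lν ⬝ᵥ (K *ᵥ (G *ᵥ u + h) - e) with hψν
  clear_value ψν
  have hLs : ∀ u, L u ls = f u + ψs u := by intro u; rw [hL]; simp [hψs]; ring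
  have hLn : ∀ u, L u lν = f u + ψν u := by intro u; rw [hL]; simp [hψν]; ring
  -- us minimizes f + ψs
  have hmins : ∀ z, f us + ψs us ≤ f z + ψs z := by
    intro z
    have := (hsaddle z ls hls).2
    rwa [hLs, hLs] at this
  -- uν minimizes f + ψν
  have hminν : ∀ z, f uν + ψν uν ≤ f z + ψν z := by
    intro z
    have := (hsaddleν z lν hlν).2
    rw [hLν, hLν, hLn, hLn] at this
    linarith
  have hconvs : ∀ (a b : Fin m → ℝ) (t : ℝ), 0 < t → t < 1 →
      ψs ((1-t) • a + t • b) ≤ (1-t) * ψs a + t * ψs b := by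
    intro a b t ht ht1
    simp only [hψs]
    exact psi_convex g hg G K h e ls a b t ht ht1
  have hconvν : ∀ (a b : Fin m → ℝ) (t : ℝ), 0 < t → t < 1 →
      ψν ((1-t) • a + t • b) ≤ (1-t) * ψν a + t * ψν b := by
    intro a b t ht ht1
    simp only [hψν]
    exact psi_convex g hg G K h e lν a b t ht ht1
  have ineqA : f us + ψs us + μ/2 * D ≤ f uν + ψs uν := by
    have := key_growth f gf μ hμ hsc ψs hconvs us hmins uν
    rwa [← hDdef] at this
  have hDsym : (us - uν) ⬝ᵥ (us - uν) = D := by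
    rw [hDdef, show us - uν = -(uν - us) by abel, neg_dotProduct, dotProduct_neg, neg_neg]
  have ineqB : f uν + ψν uν + μ/2 * D ≤ f us + ψν us := by
    have := key_growth f gf μ hμ hsc ψν hconvν uν hminν us
    rwa [hDsym] at this
  have ineqC : L us lν ≤ L us ls := (hsaddle us lν hlν).1
  have ineqD : Lν uν ls ≤ Lν uν lν := (hsaddleν uν ls hls).1
  rw [hLn, hLs] at ineqC
  rw [hLν, hLν, hLs, hLn] at ineqD
  have main : μ * D + ν / 2 * (lν ⬝ᵥ lν) ≤ ν / 2 * (ls ⬝ᵥ ls) := by linarith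
  refine ⟨main, ?_⟩
  have hlν2 : 0 ≤ lν ⬝ᵥ lν := dot_self_nonneg _
  have hDle : D ≤ ν / (2 * μ) * (ls ⬝ᵥ ls) := by
    rw [div_mul_eq_mul_div, le_div_iff₀ (by positivity)]
    nlinarith
  calc Real.sqrt D ≤ Real.sqrt (ν / (2 * μ) * (ls ⬝ᵥ ls)) := Real.sqrt_le_sqrt hDle
    _ = Real.sqrt (ν / (2 * μ)) * Real.sqrt (ls ⬝ᵥ ls) :=
      Real.sqrt_mul (by positivity) _
end

section
/- Let φ: ℝ^m → ℝ be differentiable and μ_u-strongly convex, ψ: ℝ^p → ℝ be differentiable and convex, G ∈ ℝ^{p×m}, K ∈ ℝ^{r×p}, h ∈ ℝ^p, e ∈ ℝ^r, ν > 0. Define F(u,λ) = (∇φ(u) + Gᵀ∇ψ(Gu+h) + GᵀKᵀλ, -(K(Gu+h) - e - νλ)). Then F is strongly monotone with modulus min{μ_u, ν}: for all z=(u,λ), z'=(u',λ'), (z - z')ᵀ(F(z) - F(z')) ≥ min{μ_u, ν}·‖z - z'‖². -/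
open Matrix

lemma adjoint_dot {m p : ℕ} (G : Matrix (Fin p) (Fin m) ℝ) (x : Fin m → ℝ) (y : Fin p → ℝ) :
    x ⬝ᵥ (Gᵀ *ᵥ y) = (G *ᵥ x) ⬝ᵥ y := by
  rw [Matrix.mulVec_transpose, dotProduct_comm (G *ᵥ x) y, Matrix.dotProduct_mulVec,
    dotProduct_comm]

/-- The regularized saddle-point map
`F(u,λ) = (∇φ(u) + Gᵀ∇ψ(Gu+h) + GᵀKᵀλ, -(K(Gu+h) - e - νλ))` is strongly
monotone with modulus `min{μ_u, ν}`. -/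
theorem stmt_5 {m p r : ℕ}
    (φ : (Fin m → ℝ) → ℝ) (gφ : (Fin m → ℝ) → (Fin m → ℝ))
    (ψ : (Fin p → ℝ) → ℝ) (gψ : (Fin p → ℝ) → (Fin p → ℝ))
    (G : Matrix (Fin p) (Fin m) ℝ) (K : Matrix (Fin r) (Fin p) ℝ)
    (h : Fin p → ℝ) (e : Fin r → ℝ) (μu ν : ℝ) (hμu : 0 < μu) (hν : 0 < ν)
    -- φ is μ_u-strongly convex with gradient gφ
    (hφsc : ∀ u v, φ v ≥ φ u + gφ u ⬝ᵥ (v - u) + μu / 2 * ((v - u) ⬝ᵥ (v - u)))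
    -- ψ is convex with gradient gψ
    (hψc : ∀ y y', ψ y' ≥ ψ y + gψ y ⬝ᵥ (y' - y))
    (F1 : (Fin m → ℝ) → (Fin r → ℝ) → (Fin m → ℝ))
    (F2 : (Fin m → ℝ) → (Fin r → ℝ) → (Fin r → ℝ))
    (hF1 : ∀ u l, F1 u l = gφ u + Gᵀ *ᵥ gψ (G *ᵥ u + h) + Gᵀ *ᵥ (Kᵀ *ᵥ l))
    (hF2 : ∀ u l, F2 u l = -(K *ᵥ (G *ᵥ u + h) - e - ν • l)) :
    ∀ (u u' : Fin m → ℝ) (l l' : Fin r → ℝ),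
      (u - u') ⬝ᵥ (F1 u l - F1 u' l') + (l - l') ⬝ᵥ (F2 u l - F2 u' l') ≥
        min μu ν * ((u - u') ⬝ᵥ (u - u') + (l - l') ⬝ᵥ (l - l')) := by
  intro u u' l l'
  set d := u - u' with hd
  set dl := l - l' with hdl
  -- strong convexity gives gradient monotonicity
  have h1 : d ⬝ᵥ (gφ u - gφ u') ≥ μu * (d ⬝ᵥ d) := by
    have A := hφsc u u'
    have B := hφsc u' u
    have e1 : u' - u = -d := by rw [hd, neg_sub]
    have e2 : u - u' = d := hd.symm
    rw [e1] at A
    rw [e2] at B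
    have hnn : (-d) ⬝ᵥ (-d) = d ⬝ᵥ d := by simp
    rw [hnn] at A
    have hA : gφ u ⬝ᵥ (-d) = -(gφ u ⬝ᵥ d) := by simp
    rw [hA] at A
    have : d ⬝ᵥ (gφ u - gφ u') = gφ u ⬝ᵥ d - gφ u' ⬝ᵥ d := by
      rw [dotProduct_sub, dotProduct_comm d (gφ u), dotProduct_comm d (gφ u')]
    rw [this]
    nlinarith [A, B]
  -- convexity of ψ gives monotonicity of gψ along G d
  have h2 : (G *ᵥ d) ⬝ᵥ (gψ (G *ᵥ u + h) - gψ (G *ᵥ u' + h)) ≥ 0 := by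
    set y := G *ᵥ u + h
    set y' := G *ᵥ u' + h
    have A := hψc y y'
    have B := hψc y' y
    have e1 : y' - y = -(G *ᵥ d) := by
      simp only [y, y', hd, Matrix.mulVec_sub]
      abel
    have e2 : y - y' = G *ᵥ d := by
      simp only [y, y', hd, Matrix.mulVec_sub]
      abel
    rw [e1] at A
    rw [e2] at B
    have hA : gψ y ⬝ᵥ -(G *ᵥ d) = -(gψ y ⬝ᵥ (G *ᵥ d)) := by simp
    rw [hA] at A
    have : (G *ᵥ d) ⬝ᵥ (gψ y - gψ y') = gψ y ⬝ᵥ (G *ᵥ d) - gψ y' ⬝ᵥ (G *ᵥ d) := by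
      rw [dotProduct_sub, dotProduct_comm (G *ᵥ d) (gψ y),
        dotProduct_comm (G *ᵥ d) (gψ y')]
    rw [this]
    linarith
  -- expand F1, F2 differences
  have hF1d : F1 u l - F1 u' l' =
      (gφ u - gφ u') + Gᵀ *ᵥ (gψ (G *ᵥ u + h) - gψ (G *ᵥ u' + h)) + Gᵀ *ᵥ (Kᵀ *ᵥ dl) := by
    rw [hF1, hF1]
    simp only [hdl, Matrix.mulVec_sub]
    abel
  have hF2d : F2 u l - F2 u' l' = -(K *ᵥ (G *ᵥ d)) + ν • dl := by
    rw [hF2, hF2]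
    simp only [hd, hdl, Matrix.mulVec_add, Matrix.mulVec_sub]
    module
  rw [hF1d, hF2d]
  have expand1 : d ⬝ᵥ ((gφ u - gφ u') + Gᵀ *ᵥ (gψ (G *ᵥ u + h) - gψ (G *ᵥ u' + h)) + Gᵀ *ᵥ (Kᵀ *ᵥ dl))
      = d ⬝ᵥ (gφ u - gφ u') + (G *ᵥ d) ⬝ᵥ (gψ (G *ᵥ u + h) - gψ (G *ᵥ u' + h))
        + (K *ᵥ (G *ᵥ d)) ⬝ᵥ dl := by
    rw [dotProduct_add, dotProduct_add, adjoint_dot, adjoint_dot, adjoint_dot]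
  have expand2 : dl ⬝ᵥ (-(K *ᵥ (G *ᵥ d)) + ν • dl)
      = -((K *ᵥ (G *ᵥ d)) ⬝ᵥ dl) + ν * (dl ⬝ᵥ dl) := by
    rw [dotProduct_add, dotProduct_neg, dotProduct_smul,
      dotProduct_comm dl (K *ᵥ (G *ᵥ d))]
    simp [smul_eq_mul]
  rw [expand1, expand2]
  have hdd : d ⬝ᵥ d ≥ 0 := Finset.sum_nonneg fun i _ => mul_self_nonneg (d i)
  have hdldl : dl ⬝ᵥ dl ≥ 0 := Finset.sum_nonneg fun i _ => mul_self_nonneg (dl i)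
  have hm1 : min μu ν ≤ μu := min_le_left _ _
  have hm2 : min μu ν ≤ ν := min_le_right _ _
  nlinarith [h1, h2, mul_le_mul_of_nonneg_right hm1 hdd, mul_le_mul_of_nonneg_right hm2 hdldl]
end

section
/- Let Ω ⊆ ℝ^σ be a nonempty closed convex set, F: ℝ^σ → ℝ^σ be μ-strongly monotone and ℓ-Lipschitz, η > 0, and z* ∈ Ω satisfy (v - z*)ᵀF(z*) ≥ 0 for all v ∈ Ω. Then for any z ∈ ℝ^σ, setting ẑ = P_Ω(z - ηF(z)), one has -(z - z*)ᵀ(z - ẑ) ≤ -η(μ - ηℓ²/4)‖z - z*‖². -/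
open scoped RealInnerProductSpace

/-- Key descent inequality for the projected monotone flow: if `F` is
`μ`-strongly monotone and `ℓ`-Lipschitz, `z* ∈ Ω` solves the variational
inequality, and `ẑ = P_Ω(z - ηF(z))`, then
`-(z - z*)ᵀ(z - ẑ) ≤ -η(μ - ηℓ²/4)‖z - z*‖²`. -/
theorem stmt_9 {σ : ℕ} (Ω : Set (EuclideanSpace ℝ (Fin σ)))
    (hne : Ω.Nonempty) (hcl : IsClosed Ω) (hconv : Convex ℝ Ω)
    (P : EuclideanSpace ℝ (Fin σ) → EuclideanSpace ℝ (Fin σ))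
    -- P is the Euclidean projection onto Ω
    (hP : ∀ v, P v ∈ Ω ∧ ∀ w ∈ Ω, ‖v - P v‖ ≤ ‖v - w‖)
    (F : EuclideanSpace ℝ (Fin σ) → EuclideanSpace ℝ (Fin σ))
    (μ ℓ η : ℝ) (hμ : 0 < μ) (hℓ : 0 < ℓ) (hη : 0 < η)
    (hmono : ∀ z z', ⟪z - z', F z - F z'⟫ ≥ μ * ‖z - z'‖ ^ 2)
    (hlip : ∀ z z', ‖F z - F z'‖ ≤ ℓ * ‖z - z'‖)
    (zs : EuclideanSpace ℝ (Fin σ)) (hzs : zs ∈ Ω)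
    (hVI : ∀ v ∈ Ω, ⟪v - zs, F zs⟫ ≥ 0) :
    ∀ z, -⟪z - zs, z - P (z - η • F z)⟫ ≤
      -(η * (μ - η * ℓ ^ 2 / 4)) * ‖z - zs‖ ^ 2 := by
  haveI := hne.to_subtype
  intro z
  set u := z - η • F z with hu
  obtain ⟨hwΩ, hwmin⟩ := hP u
  set w := P u with hw
  -- projection characterization
  have hbdd : BddBelow (Set.range fun v : Ω => ‖u - (v : EuclideanSpace ℝ (Fin σ))‖) :=
    ⟨0, by rintro x ⟨v, rfl⟩; positivity⟩
  have hiInf : ‖u - w‖ = ⨅ v : Ω, ‖u - (v : EuclideanSpace ℝ (Fin σ))‖ :=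
    le_antisymm (le_ciInf fun v => hwmin v v.2) (ciInf_le hbdd ⟨w, hwΩ⟩)
  have hproj := (norm_eq_iInf_iff_real_inner_le_zero hconv hwΩ).mp hiInf
  have h1 : ⟪u - w, zs - w⟫ ≤ 0 := hproj zs hzs
  -- expand the projection inequality
  have e1 : ⟪u - w, zs - w⟫ =
      ‖z - w‖ ^ 2 - ⟪z - zs, z - w⟫ - η * ⟪z - w, F z⟫ + η * ⟪z - zs, F z⟫ := by
    have hnorm := real_inner_self_eq_norm_sq (z - w)
    have hzd : zs - w = (z - w) - (z - zs) := by abel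
    rw [hu, hzd]
    simp only [inner_sub_left, inner_sub_right, real_inner_smul_left] at hnorm ⊢
    have c1 : η * ⟪F z, w⟫ = η * ⟪w, F z⟫ := by rw [real_inner_comm]
    have c2 : η * ⟪F z, zs⟫ = η * ⟪zs, F z⟫ := by rw [real_inner_comm]
    have c3 : η * ⟪F z, z⟫ = η * ⟪z, F z⟫ := by rw [real_inner_comm]
    linarith [hnorm, c1, c2, c3, real_inner_comm z w, real_inner_comm z zs,
      real_inner_comm w zs]
  rw [e1] at h1
  -- VI at zs
  have h2 : ⟪z - zs, F zs⟫ - ⟪z - w, F zs⟫ ≥ 0 := by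
    have hvi := hVI w hwΩ
    have hwzs : w - zs = (z - zs) - (z - w) := by abel
    rw [hwzs, inner_sub_left] at hvi
    linarith
  -- strong monotonicity
  have h3 : ⟪z - zs, F z⟫ - ⟪z - zs, F zs⟫ ≥ μ * ‖z - zs‖ ^ 2 := by
    have hm := hmono z zs
    rw [inner_sub_right] at hm
    linarith
  -- Lipschitz
  have h4 : ‖F z - F zs‖ ≤ ℓ * ‖z - zs‖ := hlip z zs
  -- Cauchy-Schwarz
  have h5 : ⟪z - w, F z⟫ - ⟪z - w, F zs⟫ ≤ ‖F z - F zs‖ * ‖z - w‖ := by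
    have hcs := real_inner_le_norm (F z - F zs) (z - w)
    rw [inner_sub_left] at hcs
    linarith [real_inner_comm (F z) (z - w), real_inner_comm (F zs) (z - w)]
  have hB0 : (0:ℝ) ≤ ‖z - w‖ := norm_nonneg _
  have hC0 : (0:ℝ) ≤ ‖z - zs‖ := norm_nonneg _
  have h7 : ⟪z - w, F z⟫ - ⟪z - w, F zs⟫ ≤ ℓ * ‖z - zs‖ * ‖z - w‖ :=
    h5.trans (mul_le_mul_of_nonneg_right h4 hB0)
  nlinarith [sq_nonneg (‖z - w‖ - η * ℓ * ‖z - zs‖ / 2),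
    mul_le_mul_of_nonneg_left h7 hη.le,
    mul_le_mul_of_nonneg_left h3 hη.le,
    mul_le_mul_of_nonneg_left h2 hη.le]
end

section
/- Let V: ℝ_{≥0} × ℝ^n → ℝ be continuously differentiable and suppose there exist constants 0 < a_lo ≤ a_hi, b > 0, b₀ > 0 such that a_lo‖x‖² ≤ V(t,x) ≤ a_hi‖x‖² for all (t,x), and along any solution x(t) of ẋ = f(t,x,u), (d/dt)V(t,x(t)) ≤ -b·V(t,x(t)) holds almost everywhere whenever ‖x(t)‖ ≥ b₀. Then every solution satisfies ‖x(t)‖ ≤ √(a_hi/a_lo)·(‖x(t₀)‖e^{-(b/2)(t-t₀)} + b₀) for all t ≥ t₀. -/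
/-! Write `W(t) = V(t, x(t)) - c` with `c = a_hi b₀²`. Where `W > 0`, the upper bound on `V`
forces `‖x(t)‖ > b₀`, so `W' ≤ -b V ≤ -b W` there. A locally Lipschitz function is absolutely
continuous, hence is recovered from its a.e. derivative, and a last-exit-time argument applied to
`W(t) e^{bt}` gives `W(t) ≤ max (W(t₀) e^{-b(t-t₀)}) 0`. The two-sided bound on `V` converts this
into the estimate on `‖x(t)‖`. -/

open MeasureTheory Set

theorem LocallyLipschitz.absolutelyContinuousOnInterval {f : ℝ → ℝ} (hf : LocallyLipschitz f)
    (a b : ℝ) : AbsolutelyContinuousOnInterval f a b := by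
  obtain ⟨K, hK⟩ := hf.locallyLipschitzOn.exists_lipschitzOnWith_of_compact isCompact_uIcc
  exact hK.absolutelyContinuousOnInterval

theorem LocallyLipschitz.ae_differentiableAt_real {f : ℝ → ℝ} (hf : LocallyLipschitz f) :
    ∀ᵐ t, DifferentiableAt ℝ f t :=
  LocallyBoundedVariationOn.ae_differentiableAt fun a b _ _ ↦
    (hf.absolutelyContinuousOnInterval a b).boundedVariationOn.mono
      (inter_subset_right.trans Icc_subset_uIcc)

theorem AbsolutelyContinuousOnInterval.le_of_ae_deriv_nonpos {f : ℝ → ℝ} {a b : ℝ}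
    (hf : AbsolutelyContinuousOnInterval f a b) (hab : a ≤ b)
    (hd : ∀ᵐ t, t ∈ Ioo a b → deriv f t ≤ 0) : f b ≤ f a := by
  have hftc := hf.integral_deriv_eq_sub
  rw [intervalIntegral.integral_of_le hab, integral_Ioc_eq_integral_Ioo] at hftc
  linarith [setIntegral_nonpos_ae measurableSet_Ioo hd]

theorem LocallyLipschitz.le_max_of_ae_deriv_nonpos_of_pos {H : ℝ → ℝ} (hH : LocallyLipschitz H)
    {t₀ : ℝ} (hd : ∀ᵐ t, t₀ ≤ t → 0 < H t → deriv H t ≤ 0) {t : ℝ} (ht : t₀ ≤ t) :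
    H t ≤ max (H t₀) 0 := by
  -- after the last time `s ≤ t` with `H s ≤ max (H t₀) 0`, `H` stays positive, so it cannot grow
  by_contra! hlt
  set M := max (H t₀) 0
  have hS : IsCompact {s ∈ Icc t₀ t | H s ≤ M} :=
    isCompact_Icc.inter_right (isClosed_le hH.continuous continuous_const)
  obtain ⟨s, ⟨⟨ht₀s, hst⟩, hHs⟩, hmax⟩ :=
    hS.exists_isGreatest ⟨t₀, ⟨le_rfl, ht⟩, le_max_left _ _⟩
  have hpos : ∀ u ∈ Ioo s t, M < H u := fun u hu ↦ by
    by_contra! h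
    exact hu.1.not_ge (hmax ⟨⟨ht₀s.trans hu.1.le, hu.2.le⟩, h⟩)
  have : H t ≤ H s := (hH.absolutelyContinuousOnInterval s t).le_of_ae_deriv_nonpos hst <| by
    filter_upwards [hd] with u hu hmem
    exact hu (ht₀s.trans hmem.1.le) ((le_max_right _ _).trans_lt (hpos u hmem))
  linarith

theorem LocallyLipschitz.le_max_mul_exp_of_ae_deriv_le {h : ℝ → ℝ} (hh : LocallyLipschitz h)
    {b t₀ : ℝ} (hd : ∀ᵐ t, t₀ ≤ t → 0 < h t → deriv h t ≤ -b * h t) {t : ℝ} (ht : t₀ ≤ t) :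
    h t ≤ max (h t₀ * Real.exp (-b * (t - t₀))) 0 := by
  set H := fun s ↦ h s * Real.exp (b * s)
  have hH : LocallyLipschitz H :=
    (show ContDiff ℝ 1 fun p : ℝ × ℝ ↦ p.1 * p.2 by fun_prop).locallyLipschitz.comp
      (hh.prodMk (by fun_prop : ContDiff ℝ 1 fun s : ℝ ↦ Real.exp (b * s)).locallyLipschitz)
  have hHd : ∀ᵐ s, t₀ ≤ s → 0 < H s → deriv H s ≤ 0 := by
    filter_upwards [hd, hh.ae_differentiableAt_real] with s hs hdiff hts hpos
    have hexp := Real.exp_pos (b * s)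
    have hpos' : 0 < h s := pos_of_mul_pos_left hpos hexp.le
    have hderiv : deriv H s = (deriv h s + b * h s) * Real.exp (b * s) := by
      have hH' : HasDerivAt H (deriv h s * Real.exp (b * s) + h s * (Real.exp (b * s) * b)) s :=
        hdiff.hasDerivAt.mul ((hasDerivAt_const_mul b).exp)
      rw [hH'.deriv]
      ring
    rw [hderiv]
    exact mul_nonpos_of_nonpos_of_nonneg (by linarith [hs hts hpos']) hexp.le
  have hexp := (Real.exp_pos (-(b * t))).le
  calc h t = H t * Real.exp (-(b * t)) := by simp [H, mul_assoc, ← Real.exp_add]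
    _ ≤ max (H t₀) 0 * Real.exp (-(b * t)) :=
      mul_le_mul_of_nonneg_right (hH.le_max_of_ae_deriv_nonpos_of_pos hHd ht) hexp
    _ = max (h t₀ * Real.exp (-b * (t - t₀))) 0 := by
      rw [max_mul_of_nonneg _ _ hexp, zero_mul, mul_assoc, ← Real.exp_add]
      ring_nf

theorem le_sqrt_div_mul_add_of_mul_sq_le {r A B p q : ℝ} (hp : 0 < p) (hq : 0 ≤ q) (hA : 0 ≤ A)
    (hB : 0 ≤ B) (h : p * r ^ 2 ≤ q * (A ^ 2 + B ^ 2)) : r ≤ √(q / p) * (A + B) := by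
  have hsq : r ^ 2 ≤ (√(q / p) * (A + B)) ^ 2 := by
    rw [mul_pow, Real.sq_sqrt (by positivity), div_mul_eq_mul_div, le_div_iff₀ hp]
    nlinarith [mul_nonneg hq (mul_nonneg hA hB)]
  exact le_of_sq_le_sq hsq (by positivity)

/-- Comparison-lemma / ISS-style bound: if `a_lo‖x‖² ≤ V(t,x) ≤ a_hi‖x‖²` and,
along the (locally Lipschitz) solution `x(t)`, `(d/dt)V(t,x(t)) ≤ -b V(t,x(t))`
holds almost everywhere whenever `‖x(t)‖ ≥ b₀`, then
`‖x(t)‖ ≤ √(a_hi/a_lo)(‖x(t₀)‖ e^{-(b/2)(t-t₀)} + b₀)` for all `t ≥ t₀`. -/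
theorem stmt_11 {n : ℕ}
    (V : ℝ → EuclideanSpace ℝ (Fin n) → ℝ)
    (x : ℝ → EuclideanSpace ℝ (Fin n))
    (alo ahi b b₀ t₀ : ℝ)
    (halo : 0 < alo) (hle : alo ≤ ahi) (hb : 0 < b) (hb₀ : 0 < b₀)
    -- V is continuously differentiable
    (hV : ContDiff ℝ 1 (Function.uncurry V))
    -- the solution is locally Lipschitz (absolutely continuous)
    (hx : LocallyLipschitz x)
    (hbound : ∀ t y, alo * ‖y‖ ^ 2 ≤ V t y ∧ V t y ≤ ahi * ‖y‖ ^ 2)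
    -- decay of V along the solution, almost everywhere, whenever ‖x(t)‖ ≥ b₀
    (hdecay : ∀ᵐ t ∂(volume : Measure ℝ), t₀ ≤ t → b₀ ≤ ‖x t‖ →
      deriv (fun s => V s (x s)) t ≤ -b * V t (x t)) :
    ∀ t ≥ t₀, ‖x t‖ ≤
      Real.sqrt (ahi / alo) *
        (‖x t₀‖ * Real.exp (-(b / 2) * (t - t₀)) + b₀) := by
  intro t ht
  have hahi : 0 < ahi := halo.trans_le hle
  set c := ahi * b₀ ^ 2
  have hc : 0 ≤ c := by positivity
  set W := fun s ↦ V s (x s) - c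
  have hW : LocallyLipschitz W :=
    (hV.locallyLipschitz.comp (LocallyLipschitz.id.prodMk hx)).sub (LocallyLipschitz.const c)
  have hWd : ∀ᵐ s, t₀ ≤ s → 0 < W s → deriv W s ≤ -b * W s := by
    filter_upwards [hdecay] with s hs hts hpos
    have hxs : b₀ ≤ ‖x s‖ := by
      refine le_of_sq_le_sq (le_of_mul_le_mul_left ?_ hahi) (norm_nonneg _)
      linarith [(hbound s (x s)).2, show 0 < V s (x s) - c from hpos]
    rw [deriv_sub_const]
    linarith [hs hts hxs, mul_nonneg hb.le hc]
  have hWt := hW.le_max_mul_exp_of_ae_deriv_le hWd ht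
  refine le_sqrt_div_mul_add_of_mul_sq_le halo hahi.le (by positivity) hb₀.le ?_
  have hE := (Real.exp_pos (-b * (t - t₀))).le
  have hsq : (‖x t₀‖ * Real.exp (-(b / 2) * (t - t₀))) ^ 2 =
      ‖x t₀‖ ^ 2 * Real.exp (-b * (t - t₀)) := by
    rw [mul_pow, ← Real.exp_nat_mul]
    ring_nf
  have hmax : max (W t₀ * Real.exp (-b * (t - t₀))) 0 ≤
      ahi * ‖x t₀‖ ^ 2 * Real.exp (-b * (t - t₀)) :=
    max_le (mul_le_mul_of_nonneg_right (by linarith [(hbound t₀ (x t₀)).2]) hE) (by positivity)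
  rw [hsq]
  linarith [(hbound t (x t)).1, show W t = V t (x t) - c from rfl]
end

section
/- Let T ∈ ℝ^{m×m} be symmetric with μI ⪯ T ⪯ ℓI (0 < μ ≤ ℓ), G ∈ ℝ^{p×m}, K ∈ ℝ^{r×p} with k_lo·I ⪯ KGGᵀKᵀ ⪯ k_hi·I and KG of full column rank, and let η_u, η_λ > 0 satisfy η_u > (4k_hi/(ℓμ))·η_λ. Set ρ = min{η_λ·k_lo/ℓ, η_u·μ/2}, F_z = [[-η_u T, -η_u GᵀKᵀ],[η_λ KG, 0]], and P_z = [[ℓI, GᵀKᵀ],[KG, ℓ(η_u/η_λ)I]]. Then F_zᵀP_z + P_zF_z + ρP_z ⪯ 0 (equivalently M := -(F_zᵀP_z + P_zF_z) - ρP_z ⪰ 0). -/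
/-!
Write `A = K G` and `S = η_u T - ρ I`. The matrix `-(F_zᵀ P_z + P_z F_z) - ρ P_z` has
off-diagonal block `S Aᵀ`, so it is `η_u⁻¹ NᵀN` with `N = [S, η_u Aᵀ]` plus a block-diagonal
remainder. The lower remainder `η_u (A Aᵀ - k_lo I) + (η_u k_lo - ρ ℓ η_u / η_λ) I` is
nonnegative because `ρ ≤ η_λ k_lo / ℓ`. The upper remainder is a nonnegative combination of
`ℓ T - T² ⪰ 0`, `T - μ I ⪰ 0` and `k_hi I - AᵀA ⪰ 0`, plus a multiple of `I` that is
nonnegative because `ρ ≤ η_u μ / 2` and `η_u ℓ μ ≥ 4 k_hi η_λ`.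
-/

open Matrix

open scoped ComplexOrder

namespace Matrix

variable {𝕜 : Type*} [RCLike 𝕜] {l m n : Type*}

lemma PosSemidef.of_smul {X : Matrix n n 𝕜} {a : ℝ} (ha : 0 < a) (h : (a • X).PosSemidef) :
    X.PosSemidef := by
  simpa [smul_smul, inv_mul_cancel₀ ha.ne'] using h.smul (inv_nonneg.2 ha.le)

variable [Fintype l] [Fintype m] [Fintype n]

lemma PosSemidef.smul_sub_mul_self [DecidableEq n] {T : Matrix n n 𝕜} {c : ℝ} (hc : 0 < c)
    (hT : T.PosSemidef) (hcT : (c • 1 - T).PosSemidef) : (c • T - T * T).PosSemidef := by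
  refine .of_smul hc ?_
  have key : c • (c • T - T * T) =
      (c • 1 - T) * T * (c • 1 - T)ᴴ + T * (c • 1 - T) * Tᴴ := by
    rw [hT.1.eq, hcT.1.eq]
    simp only [sub_mul, mul_sub, Matrix.smul_mul, Matrix.mul_smul, Matrix.one_mul,
      Matrix.mul_one, Matrix.mul_assoc]
    module
  rw [key]
  exact (hT.mul_mul_conjTranspose_same _).add (hcT.mul_mul_conjTranspose_same _)

lemma PosSemidef.smul_one_sub_conjTranspose_mul_self [DecidableEq m] [DecidableEq n]
    {A : Matrix m n 𝕜} {k : ℝ} (hk : 0 < k) (h : (k • 1 - A * Aᴴ).PosSemidef) :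
    (k • 1 - Aᴴ * A).PosSemidef := by
  refine .of_smul hk ?_
  have key : k • (k • 1 - Aᴴ * A) =
      (k • 1 - Aᴴ * A)ᴴ * (k • 1 - Aᴴ * A) + Aᴴ * (k • 1 - A * Aᴴ) * A := by
    simp only [conjTranspose_sub, conjTranspose_smul, conjTranspose_one, conjTranspose_mul,
      conjTranspose_conjTranspose, star_trivial, Matrix.sub_mul, Matrix.mul_sub,
      Matrix.smul_mul, Matrix.mul_smul, Matrix.one_mul, Matrix.mul_one, Matrix.mul_assoc]
    module
  rw [key]
  exact (posSemidef_conjTranspose_mul_self _).add (h.conjTranspose_mul_mul_same _)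

lemma PosSemidef.fromBlocks_diag {A : Matrix m m 𝕜} {D : Matrix n n 𝕜}
    (hA : A.PosSemidef) (hD : D.PosSemidef) : (fromBlocks A 0 0 D).PosSemidef := by
  refine .of_dotProduct_mulVec_nonneg (hA.1.fromBlocks (by simp) hD.1) fun x => ?_
  obtain ⟨y, z, rfl⟩ : ∃ y z, x = Sum.elim y z := ⟨_, _, (Sum.elim_comp_inl_inr x).symm⟩
  simp only [fromBlocks_mulVec, Sum.elim_comp_inl, Sum.elim_comp_inr, zero_mulVec, add_zero,
    zero_add, Function.star_sumElim, sumElim_dotProduct_sumElim]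
  exact add_nonneg (hA.dotProduct_mulVec_nonneg _) (hD.dotProduct_mulVec_nonneg _)

theorem posSemidef_fromBlocks_of_posSemidef_sub {X : Matrix m m 𝕜} {Z : Matrix n n 𝕜}
    (S : Matrix l m 𝕜) (B : Matrix n l 𝕜) {a : ℝ} (ha : 0 < a)
    (hX : (X - a⁻¹ • (Sᴴ * S)).PosSemidef) (hZ : (Z - a • (B * Bᴴ)).PosSemidef) :
    (fromBlocks X (Sᴴ * Bᴴ) (B * S) Z).PosSemidef := by
  set N := fromCols S (a • Bᴴ)
  have hsplit : fromBlocks X (Sᴴ * Bᴴ) (B * S) Z =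
      fromBlocks (X - a⁻¹ • (Sᴴ * S)) 0 0 (Z - a • (B * Bᴴ)) + a⁻¹ • (Nᴴ * N) := by
    simp only [N, conjTranspose_fromCols_eq_fromRows_conjTranspose, fromRows_mul_fromCols,
      fromBlocks_smul, fromBlocks_add, conjTranspose_smul, conjTranspose_conjTranspose,
      star_trivial, Matrix.smul_mul, Matrix.mul_smul, smul_smul, inv_mul_cancel₀ ha.ne']
    congr 1 <;> match_scalars <;> field_simp <;> ring
  rw [hsplit]
  exact (hX.fromBlocks_diag hZ).add ((posSemidef_conjTranspose_mul_self N).smul (by positivity))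

end Matrix

namespace PrimalDual

def flowMatrix {n r : Type*} (T : Matrix n n ℝ) (A : Matrix r n ℝ) (ηu ηl : ℝ) :
    Matrix (n ⊕ r) (n ⊕ r) ℝ :=
  fromBlocks (-ηu • T) (-ηu • Aᵀ) (ηl • A) 0

noncomputable def lyapunovMatrix {n r : Type*} [DecidableEq n] [DecidableEq r]
    (A : Matrix r n ℝ) (ℓ ηu ηl : ℝ) : Matrix (n ⊕ r) (n ⊕ r) ℝ :=
  fromBlocks (ℓ • 1) Aᵀ A ((ℓ * (ηu / ηl)) • 1)

variable {n r : Type*} [Fintype n] [DecidableEq r] {A : Matrix r n ℝ} {ℓ klo ηu ηl ρ : ℝ}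

lemma posSemidef_dual_block (hAlo : (A * Aᵀ - klo • 1).PosSemidef) (hηu : 0 ≤ ηu)
    (hηl : 0 < ηl) (hρℓ : ρ * ℓ ≤ ηl * klo) :
    ((2 * ηu) • (A * Aᵀ) - (ρ * (ℓ * (ηu / ηl))) • 1 - ηu • (A * Aᵀ)).PosSemidef := by
  have hc : 0 ≤ ηu * klo - ρ * (ℓ * (ηu / ηl)) := by
    have hρℓ' : ρ * ℓ / ηl ≤ klo := (div_le_iff₀ hηl).2 (by linarith)
    rw [show ρ * (ℓ * (ηu / ηl)) = ηu * (ρ * ℓ / ηl) by ring, ← mul_sub]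
    exact mul_nonneg hηu (sub_nonneg.2 hρℓ')
  have hsplit : (2 * ηu) • (A * Aᵀ) - (ρ * (ℓ * (ηu / ηl))) • 1 - ηu • (A * Aᵀ) =
      ηu • (A * Aᵀ - klo • 1) + (ηu * klo - ρ * (ℓ * (ηu / ηl))) • (1 : Matrix r r ℝ) := by
    module
  rw [hsplit]
  exact (hAlo.smul hηu).add (PosSemidef.one.smul hc)

variable [Fintype r] [DecidableEq n] {T : Matrix n n ℝ} {μ khi : ℝ}

lemma neg_lyapunov_derivative_sub_smul_eq_fromBlocks (hT : Tᵀ = T) (hηl : ηl ≠ 0) :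
    -((flowMatrix T A ηu ηl)ᵀ * lyapunovMatrix A ℓ ηu ηl +
        lyapunovMatrix A ℓ ηu ηl * flowMatrix T A ηu ηl) - ρ • lyapunovMatrix A ℓ ηu ηl =
      fromBlocks ((2 * ηu * ℓ) • T - (2 * ηl) • (Aᵀ * A) - (ρ * ℓ) • 1)
        ((ηu • T - ρ • 1)ᵀ * Aᵀ) (A * (ηu • T - ρ • 1))
        ((2 * ηu) • (A * Aᵀ) - (ρ * (ℓ * (ηu / ηl))) • 1) := by
  simp only [flowMatrix, lyapunovMatrix, fromBlocks_transpose, fromBlocks_multiply,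
    fromBlocks_add, fromBlocks_neg, fromBlocks_smul, sub_eq_add_neg]
  simp only [transpose_smul, transpose_neg, transpose_transpose, transpose_zero, transpose_one,
    transpose_add, hT, Matrix.smul_mul, Matrix.mul_smul, Matrix.mul_one, Matrix.one_mul,
    Matrix.mul_zero, Matrix.zero_mul, Matrix.mul_add, Matrix.add_mul, Matrix.neg_mul,
    Matrix.mul_neg, add_zero]
  congr 1 <;> match_scalars <;> field_simp <;> ring

lemma posSemidef_primal_block (hT : Tᵀ = T) (hTlo : (T - μ • 1).PosSemidef)
    (hThi : (ℓ • 1 - T).PosSemidef) (hAhi : (khi • 1 - A * Aᵀ).PosSemidef)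
    (hμ : 0 ≤ μ) (hℓ : 0 < ℓ) (hkhi : 0 < khi) (hηu : 0 < ηu) (hηl : 0 ≤ ηl) (hρ : 0 ≤ ρ)
    (hρμ : 2 * ρ ≤ ηu * μ) (hρℓ : ρ * ℓ ≤ ηl * khi)
    (hgain : 4 * ηl * khi ≤ ηu * ℓ * μ) :
    ((2 * ηu * ℓ) • T - (2 * ηl) • (Aᵀ * A) - (ρ * ℓ) • 1 -
      ηu⁻¹ • ((ηu • T - ρ • 1)ᵀ * (ηu • T - ρ • 1))).PosSemidef := by
  have hT0 : T.PosSemidef := by simpa using hTlo.add (PosSemidef.one.smul hμ)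
  have hTT : (ℓ • T - T * T).PosSemidef := hT0.smul_sub_mul_self hℓ hThi
  have hAA : (khi • 1 - Aᵀ * A).PosSemidef := by
    rw [← conjTranspose_eq_transpose_of_trivial] at hAhi ⊢
    exact PosSemidef.smul_one_sub_conjTranspose_mul_self hkhi hAhi
  set c := ηu * ℓ * μ + 2 * ρ * μ - ρ * ℓ - ρ ^ 2 / ηu - 2 * ηl * khi with hc_def
  have hc : 0 ≤ c := by
    have hρsq : ρ ^ 2 / ηu ≤ ρ * μ / 2 := by
      rw [div_le_iff₀ hηu]; nlinarith
    nlinarith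
  have hsplit : (2 * ηu * ℓ) • T - (2 * ηl) • (Aᵀ * A) - (ρ * ℓ) • 1 -
      ηu⁻¹ • ((ηu • T - ρ • 1)ᵀ * (ηu • T - ρ • 1)) =
      ηu • (ℓ • T - T * T) + (ηu * ℓ + 2 * ρ) • (T - μ • 1) +
        (2 * ηl) • (khi • 1 - Aᵀ * A) + c • 1 := by
    simp only [transpose_sub, transpose_smul, transpose_one, hT, Matrix.sub_mul, Matrix.mul_sub,
      Matrix.smul_mul, Matrix.mul_smul, Matrix.one_mul, Matrix.mul_one, hc_def]
    match_scalars <;> field_simp <;> ring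
  rw [hsplit]
  exact (((hTT.smul hηu.le).add (hTlo.smul (by positivity))).add
    (hAA.smul (by positivity))).add (PosSemidef.one.smul hc)

theorem posSemidef_neg_lyapunov_derivative_sub_smul (hT : Tᵀ = T)
    (hTlo : (T - μ • 1).PosSemidef) (hThi : (ℓ • 1 - T).PosSemidef)
    (hAlo : (A * Aᵀ - klo • 1).PosSemidef) (hAhi : (khi • 1 - A * Aᵀ).PosSemidef)
    (hμ : 0 ≤ μ) (hℓ : 0 < ℓ) (hklo : 0 < klo) (hk : klo ≤ khi) (hηu : 0 < ηu) (hηl : 0 < ηl)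
    (hρ : 0 ≤ ρ) (hρμ : 2 * ρ ≤ ηu * μ) (hρℓ : ρ * ℓ ≤ ηl * klo)
    (hgain : 4 * ηl * khi ≤ ηu * ℓ * μ) :
    (-((flowMatrix T A ηu ηl)ᵀ * lyapunovMatrix A ℓ ηu ηl +
        lyapunovMatrix A ℓ ηu ηl * flowMatrix T A ηu ηl) -
      ρ • lyapunovMatrix A ℓ ηu ηl).PosSemidef := by
  have hρℓ' : ρ * ℓ ≤ ηl * khi := hρℓ.trans (by gcongr)
  rw [neg_lyapunov_derivative_sub_smul_eq_fromBlocks hT hηl.ne',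
    ← conjTranspose_eq_transpose_of_trivial A,
    ← conjTranspose_eq_transpose_of_trivial (ηu • T - ρ • 1)]
  refine posSemidef_fromBlocks_of_posSemidef_sub _ _ hηu ?_ ?_
  · simpa only [conjTranspose_eq_transpose_of_trivial] using
      posSemidef_primal_block hT hTlo hThi hAhi hμ hℓ (hklo.trans_le hk) hηu hηl.le hρ hρμ hρℓ'
        hgain
  · simpa only [conjTranspose_eq_transpose_of_trivial] using
      posSemidef_dual_block hAlo hηu.le hηl hρℓ

end PrimalDual

theorem stmt_13_general {m p r : ℕ}
    (T : Matrix (Fin m) (Fin m) ℝ)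
    (G : Matrix (Fin p) (Fin m) ℝ) (K : Matrix (Fin r) (Fin p) ℝ)
    (μ ℓ klo khi ηu ηl : ℝ)
    (hμ : 0 < μ) (hμℓ : μ ≤ ℓ)
    (hT : T.IsSymm)
    (hTlo : (T - μ • (1 : Matrix (Fin m) (Fin m) ℝ)).PosSemidef)
    (hThi : (ℓ • (1 : Matrix (Fin m) (Fin m) ℝ) - T).PosSemidef)
    (hklo : 0 < klo) (hk : klo ≤ khi)
    (hlo : (K * G * Gᵀ * Kᵀ - klo • (1 : Matrix (Fin r) (Fin r) ℝ)).PosSemidef)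
    (hhi : (khi • (1 : Matrix (Fin r) (Fin r) ℝ) - K * G * Gᵀ * Kᵀ).PosSemidef)
    (hηu : 0 < ηu) (hηl : 0 < ηl)
    (hgain : ηu > 4 * khi / (ℓ * μ) * ηl) :
    (-( (Matrix.fromBlocks (-ηu • T) (-ηu • (Gᵀ * Kᵀ)) (ηl • (K * G)) 0)ᵀ *
          (Matrix.fromBlocks (ℓ • 1) (Gᵀ * Kᵀ) (K * G) ((ℓ * (ηu / ηl)) • 1)) +
        (Matrix.fromBlocks (ℓ • 1) (Gᵀ * Kᵀ) (K * G) ((ℓ * (ηu / ηl)) • 1)) *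
          (Matrix.fromBlocks (-ηu • T) (-ηu • (Gᵀ * Kᵀ)) (ηl • (K * G)) 0)) -
      min (ηl * klo / ℓ) (ηu * μ / 2) •
        (Matrix.fromBlocks (ℓ • 1) (Gᵀ * Kᵀ) (K * G)
          ((ℓ * (ηu / ηl)) • 1))).PosSemidef := by
  have hℓ : 0 < ℓ := hμ.trans_le hμℓ
  have hgain' : 4 * ηl * khi ≤ ηu * ℓ * μ := by
    rw [gt_iff_lt, div_mul_eq_mul_div, div_lt_iff₀ (by positivity)] at hgain
    linarith
  rw [Matrix.mul_assoc, ← transpose_mul] at hlo hhi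
  rw [← transpose_mul]
  refine PrimalDual.posSemidef_neg_lyapunov_derivative_sub_smul hT hTlo hThi hlo hhi hμ.le hℓ hklo
    hk hηu hηl (le_min (by positivity) (by positivity)) ?_ ?_ hgain'
  · linarith [min_le_right (ηl * klo / ℓ) (ηu * μ / 2)]
  · exact (le_div_iff₀ hℓ).1 (min_le_left _ _)

/-- Lyapunov matrix inequality for the primal-dual gradient flow: with
`F_z = [[-η_u T, -η_u GᵀKᵀ],[η_λ KG, 0]]`, `P_z = [[ℓI, GᵀKᵀ],[KG, ℓ(η_u/η_λ)I]]`
and `ρ = min{η_λ k_lo/ℓ, η_u μ/2}`, one has `F_zᵀP_z + P_zF_z + ρP_z ⪯ 0`. -/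
theorem stmt_13 {m p r : ℕ}
    (T : Matrix (Fin m) (Fin m) ℝ)
    (G : Matrix (Fin p) (Fin m) ℝ) (K : Matrix (Fin r) (Fin p) ℝ)
    (μ ℓ klo khi ηu ηl : ℝ)
    (hμ : 0 < μ) (hμℓ : μ ≤ ℓ)
    (hT : T.IsSymm)
    (hTlo : (T - μ • (1 : Matrix (Fin m) (Fin m) ℝ)).PosSemidef)
    (hThi : (ℓ • (1 : Matrix (Fin m) (Fin m) ℝ) - T).PosSemidef)
    (hklo : 0 < klo) (hk : klo ≤ khi)
    (hlo : (K * G * Gᵀ * Kᵀ - klo • (1 : Matrix (Fin r) (Fin r) ℝ)).PosSemidef)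
    (hhi : (khi • (1 : Matrix (Fin r) (Fin r) ℝ) - K * G * Gᵀ * Kᵀ).PosSemidef)
    -- KG has full column rank
    (hrank : Function.Injective fun v : Fin m → ℝ => (K * G) *ᵥ v)
    (hηu : 0 < ηu) (hηl : 0 < ηl)
    (hgain : ηu > 4 * khi / (ℓ * μ) * ηl) :
    (-( (Matrix.fromBlocks (-ηu • T) (-ηu • (Gᵀ * Kᵀ)) (ηl • (K * G)) 0)ᵀ *
          (Matrix.fromBlocks (ℓ • 1) (Gᵀ * Kᵀ) (K * G) ((ℓ * (ηu / ηl)) • 1)) +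
        (Matrix.fromBlocks (ℓ • 1) (Gᵀ * Kᵀ) (K * G) ((ℓ * (ηu / ηl)) • 1)) *
          (Matrix.fromBlocks (-ηu • T) (-ηu • (Gᵀ * Kᵀ)) (ηl • (K * G)) 0)) -
      min (ηl * klo / ℓ) (ηu * μ / 2) •
        (Matrix.fromBlocks (ℓ • 1) (Gᵀ * Kᵀ) (K * G)
          ((ℓ * (ηu / ηl)) • 1))).PosSemidef :=
  stmt_13_general T G K μ ℓ klo khi ηu ηl hμ hμℓ hT hTlo hThi hklo hk hlo hhi hηu hηl hgain
end

section
/- Let R ∈ ℝ^{n×n} be a nonnegative matrix with column sums at most 1 (substochastic, with at least one column sum strictly less than 1 in every closed communicating class), and F = diag(φ₁,...,φ_n) with φ_i > 0. If the spectral radius of R is strictly less than 1, then the matrix (Rᵀ - I)F is Hurwitz: all its eigenvalues have negative real part. -/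
/-!
Let `μ` be an eigenvalue of `(Rᵀ - 1) F` with `Re μ ≥ 0` and eigenvector `v`, and put
`w = F v`. The eigen-equation reads `(Rᵀ w)ᵢ = (φᵢ + μ) vᵢ`, and `|φᵢ + μ| ≥ φᵢ`, so
the nonnegative vector `x = |w|` satisfies `x ≤ Rᵀ x` entrywise. Since `R ≥ 0`,
iterating gives `x ≤ (Rᵀ)ᵏ x` for all `k`, while `Rᵏ → 0` by Gelfand's formula because
the spectral radius of `R` is below `1`. Hence `x = 0`, i.e. `v = 0`.
-/

open Matrix Filter Topology

theorem spectrum.tendsto_pow_atTop_nhds_zero_of_norm_lt_one {A : Type*} [NormedRing A]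
    [NormedAlgebra ℂ A] [CompleteSpace A] {a : A} (h : ∀ μ ∈ spectrum ℂ a, ‖μ‖ < 1) :
    Tendsto (fun k : ℕ => a ^ k) atTop (𝓝 0) := by
  nontriviality A
  have hρ : spectralRadius ℂ a < (1 : NNReal) :=
    spectrum.spectralRadius_lt_of_forall_lt a fun μ hμ => by exact_mod_cast h μ hμ
  obtain ⟨r, hρr, hr1⟩ := ENNReal.lt_iff_exists_nnreal_btwn.mp hρ
  have hbound : ∀ᶠ k : ℕ in atTop, ‖a ^ k‖ ≤ (r : ℝ) ^ k := by
    have hgelfand := spectrum.pow_nnnorm_pow_one_div_tendsto_nhds_spectralRadius a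
    filter_upwards [hgelfand.eventually_lt_const hρr, eventually_ne_atTop 0] with k hk hk0
    have : (‖a ^ k‖₊ : ENNReal) ≤ (r : ENNReal) ^ k := by
      rw [← ENNReal.rpow_inv_natCast_pow hk0 (‖a ^ k‖₊ : ENNReal), ← one_div]
      exact pow_le_pow_left₀ zero_le hk.le k
    exact_mod_cast this
  exact squeeze_zero_norm' hbound
    (tendsto_pow_atTop_nhds_zero_of_lt_one r.2 (by exact_mod_cast hr1))

namespace Matrix

variable {ι : Type*} [Fintype ι]

theorem norm_vecMul_map_ofReal_le {N : Matrix ι ι ℝ} (hN : ∀ i j, 0 ≤ N i j)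
    (w : ι → ℂ) (j : ι) :
    ‖(w ᵥ* N.map (Complex.ofReal ·)) j‖ ≤ ((fun i => ‖w i‖) ᵥ* N) j := by
  refine (norm_sum_le _ _).trans_eq (Finset.sum_congr rfl fun i _ => ?_)
  simp only [map_apply, norm_mul, Complex.norm_real, Real.norm_of_nonneg (hN i j)]

variable [DecidableEq ι]

section
attribute [local instance] Matrix.linftyOpNormedRing Matrix.linftyOpNormedAlgebra

theorem tendsto_pow_atTop_nhds_zero_of_spectrum_map_ofReal {R : Matrix ι ι ℝ}
    (h : ∀ μ ∈ spectrum ℂ (R.map (Complex.ofReal ·)), ‖μ‖ < 1) :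
    Tendsto (fun k : ℕ => R ^ k) atTop (𝓝 0) := by
  have hre : Continuous fun M : Matrix ι ι ℂ => M.map Complex.re :=
    continuous_id.matrix_map Complex.continuous_re
  have hpow (k : ℕ) : (R.map (Complex.ofReal ·)) ^ k = (R ^ k).map (Complex.ofReal ·) :=
    (map_pow Complex.ofRealHom.mapMatrix R k).symm
  simpa [Function.comp_def, hpow, Matrix.map_map] using
    (hre.tendsto 0).comp (spectrum.tendsto_pow_atTop_nhds_zero_of_norm_lt_one h)

end

theorem le_zero_of_le_vecMul {N : Matrix ι ι ℝ} (hN : ∀ i j, 0 ≤ N i j)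
    (hpow : Tendsto (fun k : ℕ => N ^ k) atTop (𝓝 0)) {x : ι → ℝ} (hx : x ≤ x ᵥ* N) :
    x ≤ 0 := by
  have hmono : Monotone fun y : ι → ℝ => y ᵥ* N := fun y z hyz j =>
    Finset.sum_le_sum fun i _ => mul_le_mul_of_nonneg_right (hyz i) (hN i j)
  have hiter (k : ℕ) : x ≤ x ᵥ* N ^ k := by
    induction k with
    | zero => simp
    | succ k ih => rw [pow_succ, ← vecMul_vecMul]; exact hx.trans (hmono ih)
  have hcont : Continuous fun M : Matrix ι ι ℝ => x ᵥ* M :=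
    continuous_const.matrix_vecMul continuous_id
  have hlim : Tendsto (fun k => x ᵥ* N ^ k) atTop (𝓝 0) := by
    simpa [Function.comp_def] using (hcont.tendsto 0).comp hpow
  exact ge_of_tendsto' hlim hiter

theorem vecMul_map_ofReal_of_mulVec_eq_smul {R : Matrix ι ι ℝ} {φ : ι → ℝ} {μ : ℂ}
    {v : ι → ℂ} (hv : ((Rᵀ - 1) * diagonal φ).map (Complex.ofReal ·) *ᵥ v = μ • v) :
    (fun i => (φ i : ℂ) * v i) ᵥ* R.map (Complex.ofReal ·) =
      fun i => ((φ i : ℂ) + μ) * v i := by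
  have hmap : ((Rᵀ - 1) * diagonal φ).map (Complex.ofReal ·)
      = ((R.map (Complex.ofReal ·))ᵀ - 1) * diagonal (fun i => (φ i : ℂ)) := by
    ext i j
    by_cases hij : i = j <;> simp [mul_diagonal, hij]
  have hdiag : diagonal (fun i => (φ i : ℂ)) *ᵥ v = fun i => (φ i : ℂ) * v i :=
    funext (mulVec_diagonal _ v)
  rw [hmap, sub_mul, one_mul, sub_mulVec, ← mulVec_mulVec, mulVec_transpose, hdiag,
    sub_eq_iff_eq_add] at hv
  rw [hv]
  ext i
  simp only [Pi.add_apply, Pi.smul_apply, smul_eq_mul]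
  ring

theorem norm_le_vecMul_norm_of_mulVec_eq_smul {R : Matrix ι ι ℝ} (hR : ∀ i j, 0 ≤ R i j)
    {φ : ι → ℝ} (hφ : ∀ i, 0 ≤ φ i) {μ : ℂ} (hμ : 0 ≤ μ.re) {v : ι → ℂ}
    (hv : ((Rᵀ - 1) * diagonal φ).map (Complex.ofReal ·) *ᵥ v = μ • v) :
    (fun i => ‖(φ i : ℂ) * v i‖) ≤ (fun i => ‖(φ i : ℂ) * v i‖) ᵥ* R := by
  intro i
  have hφμ : φ i ≤ ‖(φ i : ℂ) + μ‖ := by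
    simpa using (Complex.re_le_norm ((φ i : ℂ) + μ)).trans' (by simpa using hμ)
  calc ‖(φ i : ℂ) * v i‖ = φ i * ‖v i‖ := by
        rw [norm_mul, Complex.norm_real, Real.norm_of_nonneg (hφ i)]
    _ ≤ ‖(φ i : ℂ) + μ‖ * ‖v i‖ := by gcongr
    _ = ‖((fun i => (φ i : ℂ) * v i) ᵥ* R.map (Complex.ofReal ·)) i‖ := by
        rw [vecMul_map_ofReal_of_mulVec_eq_smul hv, norm_mul]
    _ ≤ _ := norm_vecMul_map_ofReal_le hR _ i

end Matrix

theorem stmt_17_general {n : ℕ}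
    (R : Matrix (Fin n) (Fin n) ℝ) (φ : Fin n → ℝ)
    (hRnn : ∀ i j, 0 ≤ R i j)
    (hφ : ∀ i, 0 < φ i)
    (hspec : ∀ μ ∈ spectrum ℂ (R.map (Complex.ofReal ·)), ‖μ‖ < 1) :
    ∀ μ ∈ spectrum ℂ (((Rᵀ - 1) * Matrix.diagonal φ).map (Complex.ofReal ·)),
      μ.re < 0 := by
  intro μ hμ
  by_contra! hre
  rw [← Matrix.spectrum_toLin', ← Module.End.hasEigenvalue_iff_mem_spectrum] at hμ
  obtain ⟨v, hv⟩ := hμ.exists_hasEigenvector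
  have hx := le_zero_of_le_vecMul hRnn (tendsto_pow_atTop_nhds_zero_of_spectrum_map_ofReal hspec)
    (norm_le_vecMul_norm_of_mulVec_eq_smul hRnn (fun i => (hφ i).le) hre hv.apply_eq_smul)
  refine hv.2 (funext fun i => ?_)
  have hwi : (φ i : ℂ) * v i = 0 := norm_le_zero_iff.mp (hx i)
  exact (mul_eq_zero.mp hwi).resolve_left (Complex.ofReal_ne_zero.mpr (hφ i).ne')

/-- Free-flow traffic model stability: if `R` is entrywise nonnegative with
column sums at most `1`, has spectral radius strictly less than `1`, and
`F = diag(φ)` with `φ_i > 0`, then `(Rᵀ - I)F` is Hurwitz. -/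
theorem stmt_17 {n : ℕ}
    (R : Matrix (Fin n) (Fin n) ℝ) (φ : Fin n → ℝ)
    (hRnn : ∀ i j, 0 ≤ R i j)
    (hcol : ∀ j, (∑ i, R i j) ≤ 1)
    (hφ : ∀ i, 0 < φ i)
    (hspec : ∀ μ ∈ spectrum ℂ (R.map (Complex.ofReal ·)), ‖μ‖ < 1) :
    ∀ μ ∈ spectrum ℂ (((Rᵀ - 1) * Matrix.diagonal φ).map (Complex.ofReal ·)),
      μ.re < 0 :=
  stmt_17_general R φ hRnn hφ hspec
end

section
/- Let F: ℝ^{m+r} → ℝ^{m+r} be μ-strongly monotone and ℓ-Lipschitz with 0 < μ ≤ ℓ, let Ω ⊆ ℝ^{m+r} be closed convex, let η satisfy 0 < η < 4μ/ℓ², and let z* ∈ Ω be the unique point satisfying (v-z*)ᵀF(z*) ≥ 0 for all v ∈ Ω. Then along any solution of ż = P_Ω(z - ηF(z)) - z, the function V(z) = (1/2)‖z - z*‖² satisfies (d/dt)V(z(t)) ≤ -η(μ - ηℓ²/4)·‖z(t) - z*‖², and hence ‖z(t) - z*‖ ≤ ‖z(0) - z*‖·e^{-η(μ - ηℓ²/4)t}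 for all t ≥ 0. -/
/-!
Write `a = z - z*` and `b = P_Ω(z - ηF(z)) - z` for the velocity of the flow. The projection
inequality tested against `z* ∈ Ω`, the variational inequality tested against `P_Ω(z - ηF(z)) ∈ Ω`,
strong monotonicity and the Lipschitz bound combine to
`⟪a, b⟫ ≤ -‖b‖² + ηℓ‖a‖‖b‖ - ημ‖a‖² ≤ -η(μ - ηℓ²/4)‖a‖²`, the last step by completing the square
in `‖b‖`. Since `⟪a, b⟫` is the derivative of `‖a‖² / 2` along the flow, Grönwall's inequality
gives the exponential decay.
-/

open scoped RealInnerProductSpace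

open Real Set

theorem le_mul_exp_of_hasDerivAt_le_mul {f f' : ℝ → ℝ} {K : ℝ}
    (hf : ∀ t, HasDerivAt f (f' t) t) (hbound : ∀ t, f' t ≤ K * f t) {t : ℝ} (ht : 0 ≤ t) :
    f t ≤ f 0 * exp (K * t) := by
  have hgronwall := le_gronwallBound_of_liminf_deriv_right_le (f' := f') (δ := f 0) (ε := 0) (a := 0)
    (b := t) (fun s _ => (hf s).continuousAt.continuousWithinAt)
    (fun s _ r hr => by simpa [slope_def_field, div_eq_inv_mul]
      using (hf s).hasDerivWithinAt.liminf_right_slope_le hr)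
    le_rfl (fun s _ => by simpa using hbound s) t ⟨ht, le_rfl⟩
  simpa [gronwallBound_ε0] using hgronwall

section InnerProductSpace

variable {E : Type*} [NormedAddCommGroup E] [InnerProductSpace ℝ E]

theorem real_inner_sub_le_zero_of_forall_norm_sub_le {K : Set E} (hK : Convex ℝ K) {u v : E}
    (hv : v ∈ K) (hmin : ∀ w ∈ K, ‖u - v‖ ≤ ‖u - w‖) {w : E} (hw : w ∈ K) :
    ⟪u - v, w - v⟫ ≤ 0 := by
  have : Nonempty K := ⟨⟨v, hv⟩⟩
  have hbdd : BddBelow (range fun w : K => ‖u - w‖) :=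
    ⟨0, by rintro _ ⟨w, rfl⟩; exact norm_nonneg _⟩
  refine (norm_eq_iInf_iff_real_inner_le_zero hK hv).mp ?_ w hw
  exact le_antisymm (le_ciInf fun w => hmin w w.2) (ciInf_le hbdd ⟨v, hv⟩)

theorem inner_sub_projectedStep_le {F : E → E} {μ ℓ η : ℝ} (hη : 0 ≤ η) {u zs y : E}
    (hmono : ⟪u - zs, F u - F zs⟫ ≥ μ * ‖u - zs‖ ^ 2)
    (hlip : ‖F u - F zs‖ ≤ ℓ * ‖u - zs‖)
    (hproj : ⟪u - η • F u - y, zs - y⟫ ≤ 0) (hVI : ⟪y - zs, F zs⟫ ≥ 0) :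
    ⟪u - zs, y - u⟫ ≤ -(η * (μ - η * ℓ ^ 2 / 4)) * ‖u - zs‖ ^ 2 := by
  set a := u - zs
  set b := y - u
  set D := F u - F zs
  have hproj' : ⟪a, b⟫ + ‖b‖ ^ 2 + η * ⟪a + b, F u⟫ ≤ 0 := by
    have hu : u - η • F u - y = -b - η • F u := by simp only [b]; abel
    have hzs : zs - y = -(a + b) := by simp only [a, b]; abel
    rw [hu, hzs] at hproj
    simp only [inner_sub_left, inner_neg_left, inner_neg_right, inner_add_left, inner_add_right,
      real_inner_smul_left, real_inner_self_eq_norm_sq] at hproj ⊢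
    rw [real_inner_comm a b, real_inner_comm a (F u), real_inner_comm b (F u)] at hproj
    linarith
  have hVI' : ⟪a + b, F zs⟫ ≥ 0 := by
    have : a + b = y - zs := by simp only [a, b]; abel
    rwa [this]
  have hD : ⟪a + b, F u⟫ = ⟪a, D⟫ + ⟪b, D⟫ + ⟪a + b, F zs⟫ := by
    simp only [D, inner_sub_right, inner_add_left]; ring
  have hbD : -(ℓ * ‖a‖ * ‖b‖) ≤ ⟪b, D⟫ := by
    have := (abs_le.mp (abs_real_inner_le_norm b D)).1
    nlinarith [mul_le_mul_of_nonneg_left hlip (norm_nonneg b)]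
  have hηD : η * (μ * ‖a‖ ^ 2 - ℓ * ‖a‖ * ‖b‖) ≤ η * (⟪a, D⟫ + ⟪b, D⟫) :=
    mul_le_mul_of_nonneg_left (by linarith) hη
  nlinarith [sq_nonneg (‖b‖ - η * ℓ * ‖a‖ / 2), mul_nonneg hη hVI']

theorem hasDerivAt_half_norm_sub_sq {z : ℝ → E} {v zs : E} {t : ℝ} (hz : HasDerivAt z v t) :
    HasDerivAt (fun s => 1 / 2 * ‖z s - zs‖ ^ 2) ⟪z t - zs, v⟫ t :=
  (((hz.sub_const zs).norm_sq).const_mul (1 / 2 : ℝ)).congr_deriv (by ring)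

theorem norm_sub_le_mul_exp_of_inner_deriv_le {z v : ℝ → E} {zs : E} {ρ : ℝ}
    (hz : ∀ t, HasDerivAt z (v t) t)
    (hdecay : ∀ t, ⟪z t - zs, v t⟫ ≤ -ρ * ‖z t - zs‖ ^ 2) {t : ℝ} (ht : 0 ≤ t) :
    ‖z t - zs‖ ≤ ‖z 0 - zs‖ * exp (-ρ * t) := by
  have hsq : ‖z t - zs‖ ^ 2 ≤ ‖z 0 - zs‖ ^ 2 * exp (-(2 * ρ) * t) :=
    le_mul_exp_of_hasDerivAt_le_mul (fun s => ((hz s).sub_const zs).norm_sq)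
      (fun s => by linarith [hdecay s]) ht
  have hexp : exp (-(2 * ρ) * t) = exp (-ρ * t) ^ 2 := by rw [← exp_nat_mul]; ring_nf
  rw [hexp, ← mul_pow] at hsq
  exact (pow_le_pow_iff_left₀ (norm_nonneg _) (by positivity) two_ne_zero).mp hsq

end InnerProductSpace

theorem stmt_18_general {m r : ℕ}
    (Ω : Set (EuclideanSpace ℝ (Fin (m + r))))
    (hcv : Convex ℝ Ω)
    (P : EuclideanSpace ℝ (Fin (m + r)) → EuclideanSpace ℝ (Fin (m + r)))
    -- P is the Euclidean projection onto Ω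
    (hP : ∀ v, P v ∈ Ω ∧ ∀ w ∈ Ω, ‖v - P v‖ ≤ ‖v - w‖)
    (F : EuclideanSpace ℝ (Fin (m + r)) → EuclideanSpace ℝ (Fin (m + r)))
    (μ ℓ η : ℝ) (hη : 0 < η)
    (hmono : ∀ z z', ⟪z - z', F z - F z'⟫ ≥ μ * ‖z - z'‖ ^ 2)
    (hlip : ∀ z z', ‖F z - F z'‖ ≤ ℓ * ‖z - z'‖)
    (zs : EuclideanSpace ℝ (Fin (m + r))) (hzs : zs ∈ Ω)
    (hVI : ∀ v ∈ Ω, ⟪v - zs, F zs⟫ ≥ 0)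
    -- z is a solution of the projected dynamics
    (z : ℝ → EuclideanSpace ℝ (Fin (m + r)))
    (hz : ∀ t, HasDerivAt z (P (z t - η • F (z t)) - z t) t) :
    (∀ t, deriv (fun s => (1 / 2) * ‖z s - zs‖ ^ 2) t ≤
        -(η * (μ - η * ℓ ^ 2 / 4)) * ‖z t - zs‖ ^ 2) ∧
    (∀ t ≥ (0 : ℝ), ‖z t - zs‖ ≤
        ‖z 0 - zs‖ * Real.exp (-(η * (μ - η * ℓ ^ 2 / 4)) * t)) := by
  have hdecay (t : ℝ) : ⟪z t - zs, P (z t - η • F (z t)) - z t⟫ ≤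
      -(η * (μ - η * ℓ ^ 2 / 4)) * ‖z t - zs‖ ^ 2 :=
    inner_sub_projectedStep_le hη.le (hmono _ _) (hlip _ _)
      (real_inner_sub_le_zero_of_forall_norm_sub_le hcv (hP _).1 (hP _).2 hzs)
      (hVI _ (hP _).1)
  refine ⟨fun t => ?_, fun t ht => norm_sub_le_mul_exp_of_inner_deriv_le hz hdecay ht⟩
  rw [(hasDerivAt_half_norm_sub_sq (hz t)).deriv]
  exact hdecay t

/-- Exponential convergence of the Lipschitz projected monotone flow
`ż = P_Ω(z - ηF(z)) - z`: with `F` μ-strongly monotone and ℓ-Lipschitz,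
`0 < η < 4μ/ℓ²`, and `z*` the variational-inequality solution,
`V(z) = (1/2)‖z - z*‖²` decays at rate `ρ = η(μ - ηℓ²/4)` and
`‖z(t) - z*‖ ≤ ‖z(0) - z*‖ e^{-ρt}` for all `t ≥ 0`. -/
theorem stmt_18 {m r : ℕ}
    (Ω : Set (EuclideanSpace ℝ (Fin (m + r))))
    (hne : Ω.Nonempty) (hcl : IsClosed Ω) (hcv : Convex ℝ Ω)
    (P : EuclideanSpace ℝ (Fin (m + r)) → EuclideanSpace ℝ (Fin (m + r)))
    -- P is the Euclidean projection onto Ω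
    (hP : ∀ v, P v ∈ Ω ∧ ∀ w ∈ Ω, ‖v - P v‖ ≤ ‖v - w‖)
    (F : EuclideanSpace ℝ (Fin (m + r)) → EuclideanSpace ℝ (Fin (m + r)))
    (μ ℓ η : ℝ) (hμ : 0 < μ) (hμℓ : μ ≤ ℓ) (hη : 0 < η)
    (hη4 : η < 4 * μ / ℓ ^ 2)
    (hmono : ∀ z z', ⟪z - z', F z - F z'⟫ ≥ μ * ‖z - z'‖ ^ 2)
    (hlip : ∀ z z', ‖F z - F z'‖ ≤ ℓ * ‖z - z'‖)
    (zs : EuclideanSpace ℝ (Fin (m + r))) (hzs : zs ∈ Ω)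
    (hVI : ∀ v ∈ Ω, ⟪v - zs, F zs⟫ ≥ 0)
    -- z is a solution of the projected dynamics
    (z : ℝ → EuclideanSpace ℝ (Fin (m + r)))
    (hz : ∀ t, HasDerivAt z (P (z t - η • F (z t)) - z t) t) :
    (∀ t, deriv (fun s => (1 / 2) * ‖z s - zs‖ ^ 2) t ≤
        -(η * (μ - η * ℓ ^ 2 / 4)) * ‖z t - zs‖ ^ 2) ∧
    (∀ t ≥ (0 : ℝ), ‖z t - zs‖ ≤
        ‖z 0 - zs‖ * Real.exp (-(η * (μ - η * ℓ ^ 2 / 4)) * t)) :=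
  stmt_18_general Ω hcv P hP F μ ℓ η hη hmono hlip zs hzs hVI z hz
end
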